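/- Let R be a commutative ring equipped with an exhaustive Γ-filtration FR = {F_γR}_{γ∈Γ}, where Γ is a totally ordered monoid, and set R₀ = F₀R. Let I be an ideal of R⟨X⟩ = R⟨X₁,...,Xₙ⟩ generated by a subset G ⊆ R₀⟨X⟩ which is a monic Gröbner basis of I in R⟨X⟩ with respect to a monomial ordering ≺ on B_R, with LM(g) ≠ 1 for every g ∈ G, and endow A = R⟨X⟩/I with the Γ-filtration FA given by F_γA = { Σ_i λ_i w̄_i : λ_i ∈ F_γR, w̄_i ∈ N̄(G) }. If the filtration FR of R is separated, then FA is separated: for every nonzero a ∈ A there is γ ∈ Γ with a ∈ F_γA − F_{<γ}A, where F_{<γ}A = ∪_{γ'<γ} F_{γ'}A. In particular, if 1 ∈ F₀R − F_{<0}R then 1 ∈ F₀A − F_{<0}A. -/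

import Mathlib

open scoped Classical

/-- Words in the alphabet `X₁,...,Xₙ`: the standard basis `B` of monomials of the free algebra. -/
abbrev Word (n : ℕ) : Type := FreeMonoid (Fin n)

/-- The free `R`-algebra `R⟨X₁,...,Xₙ⟩`, realized as the monoid algebra on words. -/
abbrev FreeAlg (R : Type) [CommRing R] (n : ℕ) : Type := MonoidAlgebra R (Word n)

/-- `v` divides `u` as words: `u = w * v * s` for some words `w, s`. -/
def WordDvd {n : ℕ} (v u : Word n) : Prop := ∃ w s : Word n, u = w * v * s

/-- A monomial ordering on the words in `X₁,...,Xₙ`: a well-ordering `≺` such that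
(M1) `u ≺ v` implies `w*u*s ≺ w*v*s`, and (M2) `w = u*v` implies `u ⪯ w` and `v ⪯ w`. -/
structure MonomialOrdering (n : ℕ) where
  lt : Word n → Word n → Prop
  strictTotal : IsStrictTotalOrder (Word n) lt
  wellFounded : WellFounded lt
  mul_compat : ∀ w u v s : Word n, lt u v → lt (w * u * s) (w * v * s)
  factor_le : ∀ u v : Word n, ¬ lt (u * v) u ∧ ¬ lt (u * v) v

namespace MonomialOrdering

/-- `u ⪯ v` for a monomial ordering. -/
def le {n : ℕ} (o : MonomialOrdering n) (u v : Word n) : Prop := u = v ∨ o.lt u v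

end MonomialOrdering

/-- The leading monomial `LM(f)` of `f`: the `≺`-greatest word occurring in `f`
(with junk value `1` if `f = 0`). -/
noncomputable def LM {R : Type} [CommRing R] {n : ℕ} (o : MonomialOrdering n)
    (f : FreeAlg R n) : Word n :=
  if h : ∃ w, w ∈ f.coeff.support ∧ ∀ u ∈ f.coeff.support, o.le u w then h.choose else 1

/-- The leading coefficient `LC(f)` of `f`: the coefficient of `LM(f)` in `f`. -/
noncomputable def LC {R : Type} [CommRing R] {n : ℕ} (o : MonomialOrdering n)
    (f : FreeAlg R n) : R := f.coeff (LM o f)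

/-- A subset `G` is monic if every `g ∈ G` is nonzero with leading coefficient `1`. -/
def IsMonicSet {R : Type} [CommRing R] {n : ℕ} (o : MonomialOrdering n)
    (G : Set (FreeAlg R n)) : Prop := ∀ g ∈ G, g ≠ 0 ∧ LC o g = 1

/-- `G` is a monic Gröbner basis of the two-sided ideal `I`: a monic subset of `I` such that
the leading monomial of every nonzero `f ∈ I` is divisible by `LM(g)` for some `g ∈ G`. -/
def IsMonicGB {R : Type} [CommRing R] {n : ℕ} (o : MonomialOrdering n)
    (G : Set (FreeAlg R n)) (I : TwoSidedIdeal (FreeAlg R n)) : Prop :=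
  (∀ g ∈ G, g ∈ I) ∧ IsMonicSet o G ∧
    ∀ f : FreeAlg R n, f ∈ I → f ≠ 0 → ∃ g ∈ G, WordDvd (LM o g) (LM o f)

/-- The word `u` viewed as a monomial (with coefficient `1`) of the free algebra. -/
noncomputable def mono (R : Type) [CommRing R] {n : ℕ} (u : Word n) : FreeAlg R n :=
  MonoidAlgebra.single u 1

/-- `f` has a Gröbner representation `f = Σ_{i} λ_i u_i g_i v_i` with
`LM(u_i g_i v_i) ⪯ LM(f)` whenever `λ_i ≠ 0`. -/
def HasGroebnerRep {R : Type} [CommRing R] {n : ℕ} (o : MonomialOrdering n)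
    (G : Set (FreeAlg R n)) (f : FreeAlg R n) : Prop :=
  ∃ (m : ℕ) (lam : Fin m → R) (u v : Fin m → Word n) (g : Fin m → FreeAlg R n),
    (∀ i, g i ∈ G) ∧
    f = ∑ i, lam i • (mono R (u i) * g i * mono R (v i)) ∧
    ∀ i, lam i ≠ 0 → o.le (LM o (mono R (u i) * g i * mono R (v i))) (LM o f)

/-- The set `N(G)` of normal words (mod `G`): words divisible by no `LM(g)`, `g ∈ G`. -/
def NSet {R : Type} [CommRing R] {n : ℕ} (o : MonomialOrdering n)
    (G : Set (FreeAlg R n)) : Set (Word n) :=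
  {u : Word n | ∀ g ∈ G, ¬ WordDvd (LM o g) u}

/-- `f` is a normal element (mod `G`): every word occurring in `f` is normal. -/
def IsNormal {R : Type} [CommRing R] {n : ℕ} (o : MonomialOrdering n)
    (G : Set (FreeAlg R n)) (f : FreeAlg R n) : Prop :=
  ∀ u ∈ f.coeff.support, u ∈ NSet o G

/-- `G` is LM-reduced: `LM(g) ∤ LM(g')` for distinct `g, g' ∈ G`. -/
def LMReduced {R : Type} [CommRing R] {n : ℕ} (o : MonomialOrdering n)
    (G : Set (FreeAlg R n)) : Prop :=
  ∀ g ∈ G, ∀ g' ∈ G, g ≠ g' → ¬ WordDvd (LM o g) (LM o g')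

/-- An exhaustive `Γ`-filtration on a ring `S`, where `Γ` is a totally ordered
(not necessarily commutative) additive monoid: a family of additive subgroups
`F γ` of `S` with (F1) `S = ∪_γ F γ`, (F2) `F γ₁ ⊆ F γ₂` for `γ₁ < γ₂`,
(F3) `F γ · F τ ⊆ F (γ + τ)`, (F4) `1 ∈ F 0`. -/
structure RingFiltration (Γ : Type) [AddMonoid Γ] [LinearOrder Γ] (S : Type) [Ring S] where
  F : Γ → AddSubgroup S
  exhaustive : ∀ s : S, ∃ γ : Γ, s ∈ F γ
  mono : ∀ ⦃γ₁ γ₂ : Γ⦄, γ₁ < γ₂ → F γ₁ ≤ F γ₂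
  mul_mem : ∀ ⦃γ τ : Γ⦄ ⦃a b : S⦄, a ∈ F γ → b ∈ F τ → a * b ∈ F (γ + τ)
  one_mem : 1 ∈ F 0

/-- The quotient ring `A = R⟨X₁,...,Xₙ⟩/I` of the free algebra by a two-sided ideal `I`. -/
abbrev QuotAlg {R : Type} [CommRing R] {n : ℕ} (I : TwoSidedIdeal (FreeAlg R n)) : Type :=
  RingQuot (fun a b : FreeAlg R n => a - b ∈ I)

/-- The canonical projection `R⟨X₁,...,Xₙ⟩ → A = R⟨X⟩/I`. -/
noncomputable def quotProj {R : Type} [CommRing R] {n : ℕ}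
    (I : TwoSidedIdeal (FreeAlg R n)) : FreeAlg R n →+* QuotAlg I :=
  RingQuot.mkRingHom (fun a b : FreeAlg R n => a - b ∈ I)

/-- The `Γ`-filtration `F_γA = {Σᵢ λᵢ·w̄ᵢ : λᵢ ∈ F_γR, wᵢ ∈ N(G)}` on `A = R⟨X⟩/I`
induced by a filtration of `R` and the normal words mod `G`:  it is the additive subgroup of
`A` generated by the classes of the elements `λ·u` with `λ ∈ F_γR` and `u ∈ N(G)`. -/
noncomputable def inducedFiltration {Γ : Type} [AddMonoid Γ] [LinearOrder Γ]
    {R : Type} [CommRing R] {n : ℕ} (FR : RingFiltration Γ R) (o : MonomialOrdering n)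
    (G : Set (FreeAlg R n)) (I : TwoSidedIdeal (FreeAlg R n)) (γ : Γ) :
    AddSubgroup (QuotAlg I) :=
  AddSubgroup.closure
    {x : QuotAlg I | ∃ lam ∈ FR.F γ, ∃ u ∈ NSet o G,
      x = quotProj I (MonoidAlgebra.single u lam)}

/-!
Because `G` is a monic Gröbner basis, the classes of the normal words form an `R`-basis of `A`:
division by `G` (well-founded induction along `≺`, replacing `w·LM(g)·s` by the smaller words of
`w·(LM(g) - g)·s`) reduces every element modulo `I` to a normal one, and a nonzero element of `I`
is never normal, since its leading word is divisible by some `LM(g)`. Consequently `F_γA` is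
exactly the set of classes of normal elements all of whose coefficients lie in `F_γR`, and the
degree of `a ≠ 0` is the largest of the degrees of the coefficients of its normal form.
-/

open MonoidAlgebra

namespace MonomialOrdering

variable {n : ℕ} (o : MonomialOrdering n)

theorem exists_max (s : Finset (Word n)) (hs : s.Nonempty) : ∃ w ∈ s, ∀ u ∈ s, o.le u w := by
  let := @linearOrderOfSTO _ o.lt o.strictTotal (Classical.decRel _)
  exact s.exists_max_image id hs

end MonomialOrdering

section LeadingMonomial

variable {R : Type} [CommRing R] {n : ℕ} {o : MonomialOrdering n} {f : FreeAlg R n}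

theorem LM_mem_support_and_le (hf : f ≠ 0) :
    LM o f ∈ f.coeff.support ∧ ∀ u ∈ f.coeff.support, o.le u (LM o f) := by
  have hex := o.exists_max f.coeff.support (Finsupp.support_nonempty_iff.2 (by simpa using hf))
  rw [LM, dif_pos hex]
  exact hex.choose_spec

theorem LM_mem_support (hf : f ≠ 0) : LM o f ∈ f.coeff.support :=
  (LM_mem_support_and_le hf).1

theorem le_LM {u : Word n} (hu : u ∈ f.coeff.support) : o.le u (LM o f) :=
  (LM_mem_support_and_le (by rintro rfl; simp at hu)).2 u hu

end LeadingMonomial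

section NormalForm

variable {R : Type} [CommRing R] {n : ℕ} {o : MonomialOrdering n} {G : Set (FreeAlg R n)}
  {I : TwoSidedIdeal (FreeAlg R n)}

theorem isNormal_iff_mem_supported {f : FreeAlg R n} :
    IsNormal o G f ↔ f ∈ supported R R (NSet o G) :=
  Iff.rfl

theorem isNormal_single {u : Word n} (hu : u ∈ NSet o G) (r : R) :
    IsNormal o G (single u r) := fun v hv => by
  rwa [Finset.mem_singleton.1 (Finsupp.support_single_subset hv)]

theorem one_mem_NSet (hLM1 : ∀ g ∈ G, LM o g ≠ 1) : (1 : Word n) ∈ NSet o G := by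
  rintro g hg ⟨w, s, hws⟩
  exact hLM1 g hg (LeftCancelMonoid.mul_eq_one.1 (LeftCancelMonoid.mul_eq_one.1 hws.symm).1).2

theorem sub_single_LM_mem_supported {g : FreeAlg R n} (hLC : LC o g = 1) :
    g - single (LM o g) 1 ∈ supported R R {v | o.lt v (LM o g)} := by
  intro v hv
  by_cases hvLM : v = LM o g
  · subst hvLM
    simp [← hLC, LC] at hv
  · refine (le_LM ?_).resolve_left hvLM
    simpa [Finsupp.single_apply, Ne.symm hvLM] using hv

theorem single_mul_mul_single_mem_supported {m : Word n} {t : FreeAlg R n}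
    (ht : t ∈ supported R R {v | o.lt v m}) (w s : Word n) :
    single w 1 * t * single s 1 ∈ supported R R {v | o.lt v (w * m * s)} := by
  intro v hv
  obtain ⟨v', hv', rfl⟩ := Finset.mem_image.1 (support_coeff_mul_single_subset _ _ _ hv)
  obtain ⟨v'', hv'', rfl⟩ := Finset.mem_image.1 (support_coeff_single_mul_subset _ _ _ hv')
  exact o.mul_compat w v'' m s (ht hv'')

theorem single_mem_supported_sup (hGI : ∀ g ∈ G, g ∈ I) (hM : IsMonicSet o G) (u : Word n) :
    single u (1 : R) ∈ supported R R (NSet o G) ⊔ I.asIdeal.restrictScalars R := by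
  induction u using o.wellFounded.induction with
  | _ u ih =>
  by_cases hu : u ∈ NSet o G
  · exact Submodule.mem_sup_left (isNormal_single hu 1)
  obtain ⟨g, hgG, w, s, rfl⟩ : ∃ g ∈ G, WordDvd (LM o g) u := by
    simpa [NSet] using hu
  have hq : single w 1 * g * single s 1 ∈ I.asIdeal.restrictScalars R := by
    simpa using I.mul_mem_right _ _ (I.mul_mem_left _ _ (hGI g hgG))
  have hlower : single w 1 * (g - single (LM o g) 1) * single s 1 ∈
      supported R R (NSet o G) ⊔ I.asIdeal.restrictScalars R := by
    refine (?_ : supported R R {v | o.lt v (w * LM o g * s)} ≤ _)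
      (single_mul_mul_single_mem_supported (sub_single_LM_mem_supported (hM g hgG).2) w s)
    rw [supported_eq_span_single, Submodule.span_le]
    rintro _ ⟨v, hv, rfl⟩
    exact ih v hv
  have hsplit : single (w * LM o g * s) (1 : R) =
      single w 1 * g * single s 1 - single w 1 * (g - single (LM o g) 1) * single s 1 := by
    simp [mul_sub, sub_mul, single_mul_single]
  rw [hsplit]
  exact Submodule.sub_mem _ (Submodule.mem_sup_right hq) hlower

theorem supported_sup_eq_top (hGI : ∀ g ∈ G, g ∈ I) (hM : IsMonicSet o G) :
    supported R R (NSet o G) ⊔ I.asIdeal.restrictScalars R = ⊤ := by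
  rw [eq_top_iff, ← (MonoidAlgebra.basis (Word n) R).span_eq, Submodule.span_le]
  rintro _ ⟨u, rfl⟩
  exact single_mem_supported_sup hGI hM u

end NormalForm

section Quotient

variable {R : Type} [CommRing R] {n : ℕ} {o : MonomialOrdering n} {G : Set (FreeAlg R n)}
  {I : TwoSidedIdeal (FreeAlg R n)}

theorem quotProj_eq_quotProj_iff {f f' : FreeAlg R n} :
    quotProj I f = quotProj I f' ↔ f - f' ∈ I := by
  refine ⟨fun h => ?_, fun h => RingQuot.mkRingHom_rel h⟩
  have hresp : ∀ ⦃x y : FreeAlg R n⦄, x - y ∈ I → I.ringCon.mk' x = I.ringCon.mk' y :=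
    fun x y hxy => (RingCon.eq I.ringCon).2 ((I.rel_iff x y).2 hxy)
  have h' := congrArg (RingQuot.lift ⟨I.ringCon.mk', hresp⟩) h
  rw [quotProj, RingQuot.lift_mkRingHom_apply, RingQuot.lift_mkRingHom_apply] at h'
  exact (I.rel_iff f f').1 ((RingCon.eq I.ringCon).1 h')

theorem exists_isNormal_quotProj_eq (hGI : ∀ g ∈ G, g ∈ I) (hM : IsMonicSet o G)
    (a : QuotAlg I) : ∃ h, IsNormal o G h ∧ quotProj I h = a := by
  obtain ⟨f, rfl⟩ := RingQuot.mkRingHom_surjective _ a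
  obtain ⟨h, hh, z, hz, rfl⟩ := Submodule.mem_sup.1
    (supported_sup_eq_top hGI hM ▸ Submodule.mem_top : f ∈ _)
  exact ⟨h, hh, quotProj_eq_quotProj_iff.2 (by simpa using hz)⟩

theorem eq_zero_of_mem_of_isNormal
    (hGB : ∀ f ∈ I, f ≠ 0 → ∃ g ∈ G, WordDvd (LM o g) (LM o f))
    {f : FreeAlg R n} (hfI : f ∈ I) (hf : IsNormal o G f) : f = 0 := by
  by_contra hf0
  obtain ⟨g, hgG, hdvd⟩ := hGB f hfI hf0
  exact hf (LM o f) (LM_mem_support hf0) g hgG hdvd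

theorem IsNormal.eq_of_quotProj_eq
    (hGB : ∀ f ∈ I, f ≠ 0 → ∃ g ∈ G, WordDvd (LM o g) (LM o f))
    {f f' : FreeAlg R n} (hf : IsNormal o G f) (hf' : IsNormal o G f')
    (heq : quotProj I f = quotProj I f') : f = f' :=
  sub_eq_zero.1 <| eq_zero_of_mem_of_isNormal hGB (quotProj_eq_quotProj_iff.1 heq)
    (Submodule.sub_mem _ (isNormal_iff_mem_supported.1 hf) (isNormal_iff_mem_supported.1 hf'))

end Quotient

section Filtration

variable {Γ : Type} [AddMonoid Γ] [LinearOrder Γ]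

theorem RingFiltration.monotone {S : Type} [Ring S] (FS : RingFiltration Γ S) : Monotone FS.F :=
  monotone_iff_forall_lt.2 FS.mono

def coeffFiltration {R : Type} [Ring R] {M : Type*} (FR : RingFiltration Γ R) (γ : Γ) :
    AddSubgroup (MonoidAlgebra R M) where
  carrier := {f | ∀ u, f.coeff u ∈ FR.F γ}
  add_mem' hf hg u := by simpa using (FR.F γ).add_mem (hf u) (hg u)
  zero_mem' u := by simp
  neg_mem' hf u := by simpa using (FR.F γ).neg_mem (hf u)

variable {R : Type} [Ring R] {M : Type*} {FR : RingFiltration Γ R}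

theorem single_mem_coeffFiltration_iff {γ : Γ} {u : M} {r : R} :
    single u r ∈ coeffFiltration FR γ ↔ r ∈ FR.F γ := by
  classical
  refine ⟨fun h => by simpa using h u, fun h v => ?_⟩
  rw [coeff_single, Finsupp.single_apply]
  split_ifs
  exacts [h, (FR.F γ).zero_mem]

theorem exists_mem_coeffFiltration_forall_lt_notMem
    (hsep : ∀ r : R, r ≠ 0 → ∃ γ : Γ, r ∈ FR.F γ ∧ ∀ γ' < γ, r ∉ FR.F γ')
    {f : MonoidAlgebra R M} (hf : f ≠ 0) :
    ∃ γ, f ∈ coeffFiltration FR γ ∧ ∀ γ' < γ, f ∉ coeffFiltration FR γ' := by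
  choose! deg hdeg_mem hdeg_min using fun u (hu : u ∈ f.coeff.support) =>
    hsep (f.coeff u) (Finsupp.mem_support_iff.1 hu)
  have hne : (f.coeff.support.image deg).Nonempty := by simpa using hf
  obtain ⟨u₀, hu₀, hmax⟩ := Finset.mem_image.1 (Finset.max'_mem _ hne)
  refine ⟨deg u₀, fun u => ?_, fun γ' hγ' hmem => hdeg_min u₀ hu₀ γ' hγ' (hmem u₀)⟩
  by_cases hu : u ∈ f.coeff.support
  · refine FR.monotone ?_ (hdeg_mem u hu)
    exact hmax ▸ Finset.le_max' _ _ (Finset.mem_image_of_mem deg hu)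
  · simp [Finsupp.notMem_support_iff.1 hu]

end Filtration

section InducedFiltration

variable {Γ : Type} [AddMonoid Γ] [LinearOrder Γ] {R : Type} [CommRing R] {n : ℕ}
  {FR : RingFiltration Γ R} {o : MonomialOrdering n} {G : Set (FreeAlg R n)}
  {I : TwoSidedIdeal (FreeAlg R n)}

theorem inducedFiltration_eq_map (γ : Γ) :
    inducedFiltration FR o G I γ =
      ((supported R R (NSet o G)).toAddSubgroup ⊓ coeffFiltration FR γ).map
        (quotProj I).toAddMonoidHom := by
  refine le_antisymm (AddSubgroup.closure_le _ |>.2 ?_) (AddSubgroup.map_le_iff_le_comap.2 ?_)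
  · rintro _ ⟨r, hr, u, hu, rfl⟩
    exact ⟨single u r, ⟨isNormal_single hu r, single_mem_coeffFiltration_iff.2 hr⟩, rfl⟩
  · rintro h ⟨hh, hcoeff⟩
    rw [AddSubgroup.mem_comap, ← sum_coeff_single h, Finsupp.sum, map_sum]
    exact AddSubgroup.sum_mem _ fun u hu =>
      AddSubgroup.subset_closure ⟨h.coeff u, hcoeff u, u, hh hu, rfl⟩

theorem quotProj_mem_inducedFiltration_iff
    (hGB : ∀ f ∈ I, f ≠ 0 → ∃ g ∈ G, WordDvd (LM o g) (LM o f))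
    {h : FreeAlg R n} (hh : IsNormal o G h) {γ : Γ} :
    quotProj I h ∈ inducedFiltration FR o G I γ ↔ h ∈ coeffFiltration FR γ := by
  rw [inducedFiltration_eq_map]
  refine ⟨fun ⟨f, ⟨hf, hfγ⟩, hfh⟩ => ?_, fun hγ => ⟨h, ⟨hh, hγ⟩, rfl⟩⟩
  rwa [← IsNormal.eq_of_quotProj_eq hGB hf hh hfh]

end InducedFiltration

theorem induced_filtration_separated_general {Γ : Type} [AddMonoid Γ] [LinearOrder Γ]
    {R : Type} [CommRing R] {n : ℕ} (FR : RingFiltration Γ R) (o : MonomialOrdering n)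
    (G : Set (FreeAlg R n)) (I : TwoSidedIdeal (FreeAlg R n))
    (hGB : IsMonicGB o G I)
    (hLM1 : ∀ g ∈ G, LM o g ≠ 1)
    (hsep : ∀ lam : R, lam ≠ 0 → ∃ γ : Γ, lam ∈ FR.F γ ∧ ∀ γ' < γ, lam ∉ FR.F γ') :
    (∀ a : QuotAlg I, a ≠ 0 → ∃ γ : Γ, a ∈ inducedFiltration FR o G I γ ∧
        ∀ γ' < γ, a ∉ inducedFiltration FR o G I γ') ∧
    (((1 : R) ∈ FR.F 0 ∧ ∀ γ' < (0 : Γ), (1 : R) ∉ FR.F γ') →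
      ((1 : QuotAlg I) ∈ inducedFiltration FR o G I 0 ∧
        ∀ γ' < (0 : Γ), (1 : QuotAlg I) ∉ inducedFiltration FR o G I γ')) := by
  obtain ⟨hGI, hM, hLMdvd⟩ := hGB
  refine ⟨fun a ha => ?_, fun hone => ?_⟩
  · obtain ⟨h, hh, rfl⟩ := exists_isNormal_quotProj_eq hGI hM a
    obtain ⟨γ, hγ, hlt⟩ := exists_mem_coeffFiltration_forall_lt_notMem hsep
      (show h ≠ 0 by rintro rfl; exact ha (map_zero _))
    simp only [quotProj_mem_inducedFiltration_iff hLMdvd hh]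
    exact ⟨γ, hγ, hlt⟩
  · have hone_eq : quotProj I (single 1 1) = 1 := by rw [← one_def, map_one]
    rw [← hone_eq]
    simpa only [quotProj_mem_inducedFiltration_iff hLMdvd (isNormal_single (one_mem_NSet hLM1) 1),
      single_mem_coeffFiltration_iff] using hone

/-- **Theorem 4.1.**  With `R`, `FR`, `G ⊆ R₀⟨X⟩` a monic Gröbner basis of `I = ⟨G⟩`
(`LM(g) ≠ 1` for all `g ∈ G`) as in Theorem 3.1, endow `A = R⟨X⟩/I` with the induced
`Γ`-filtration `FA`.  If `FR` is separated then `FA` is separated: every nonzero `a ∈ A`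
lies in `F_γA − F_{<γ}A` for some `γ ∈ Γ`.  In particular, if `1 ∈ F₀R − F_{<0}R` then
`1 ∈ F₀A − F_{<0}A`. -/
theorem induced_filtration_separated {Γ : Type} [AddMonoid Γ] [LinearOrder Γ]
    {R : Type} [CommRing R] {n : ℕ} (FR : RingFiltration Γ R) (o : MonomialOrdering n)
    (G : Set (FreeAlg R n)) (I : TwoSidedIdeal (FreeAlg R n))
    (hG0 : ∀ g ∈ G, ∀ u : Word n, g.coeff u ∈ FR.F 0)
    (hgen : I = TwoSidedIdeal.span G) (hGB : IsMonicGB o G I)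
    (hLM1 : ∀ g ∈ G, LM o g ≠ 1)
    (hsep : ∀ lam : R, lam ≠ 0 → ∃ γ : Γ, lam ∈ FR.F γ ∧ ∀ γ' < γ, lam ∉ FR.F γ') :
    (∀ a : QuotAlg I, a ≠ 0 → ∃ γ : Γ, a ∈ inducedFiltration FR o G I γ ∧
        ∀ γ' < γ, a ∉ inducedFiltration FR o G I γ') ∧
    (((1 : R) ∈ FR.F 0 ∧ ∀ γ' < (0 : Γ), (1 : R) ∉ FR.F γ') →
      ((1 : QuotAlg I) ∈ inducedFiltration FR o G I 0 ∧
        ∀ γ' < (0 : Γ), (1 : QuotAlg I) ∉ inducedFiltration FR o G I γ')) :=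
  induced_filtration_separated_general FR o G I hGB hLM1 hsep
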